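/- arXiv:1106.0261 — 8 statements merged into one kernel-verified Lean document; each statement's English description precedes it below -/
import Mathlib

section
/- Let Λ be a nonzero complex number and let D be the 2×2 complex matrix with zero diagonal, top-right entry Λ and bottom-left entry the complex conjugate of Λ. Then the supremum of |z₁ − z₂| over all pairs (z₁, z₂) ∈ ℂ² such that the commutator [D, diag(z₁, z₂)] has ℓ²-operator norm at most 1 is equal to 1/|Λ|, and this supremum is attained. -/
/-!
The commutator `C = [D, diag(z₁, z₂)]` is antidiagonal with entries `Λ (z₂ - z₁)` and
`conj Λ (z₁ - z₂)` of equal modulus, so `Cᴴ C` is a scalar and the C*-identity gives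
`‖C‖ = ‖Λ‖ ‖z₁ - z₂‖`. The constraint is therefore `‖z₁ - z₂‖ ≤ 1 / ‖Λ‖`, attained at `(1 / ‖Λ‖, 0)`.
-/

open scoped Matrix.Norms.L2Operator

theorem CStarRing.norm_sq_eq_of_star_mul_self_eq_smul_one {𝕜 E : Type*} [NormedField 𝕜]
    [NormedRing E] [StarRing E] [CStarRing E] [NormOneClass E] [NormedSpace 𝕜 E]
    {x : E} {a : 𝕜} (h : star x * x = a • 1) : ‖x‖ ^ 2 = ‖a‖ := by
  rw [sq, ← CStarRing.norm_star_mul_self, h, norm_smul, NormOneClass.norm_one, mul_one]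

theorem commutator_antidiagonal_diagonal {R : Type*} [CommRing R] (a b z₁ z₂ : R) :
    !![0, a; b, 0] * !![z₁, 0; 0, z₂] - !![z₁, 0; 0, z₂] * !![0, a; b, 0]
      = !![0, a * (z₂ - z₁); b * (z₁ - z₂), 0] := by
  ext i j
  fin_cases i <;> fin_cases j <;> simp <;> ring

theorem star_antidiagonal_mul_self_of_norm_eq {a b : ℂ} (hab : ‖a‖ = ‖b‖) :
    star !![0, a; b, 0] * !![0, a; b, 0]
      = ((‖a‖ ^ 2 : ℝ) : ℂ) • (1 : Matrix (Fin 2) (Fin 2) ℂ) := by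
  ext i j
  fin_cases i <;> fin_cases j <;>
    simp [Matrix.mul_apply, Matrix.star_eq_conjTranspose, Complex.conj_mul', hab]

theorem norm_antidiagonal_of_norm_eq {a b : ℂ} (hab : ‖a‖ = ‖b‖) :
    ‖(!![0, a; b, 0] : Matrix (Fin 2) (Fin 2) ℂ)‖ = ‖a‖ := by
  have h := CStarRing.norm_sq_eq_of_star_mul_self_eq_smul_one
    (star_antidiagonal_mul_self_of_norm_eq hab)
  rw [Complex.norm_real, Real.norm_of_nonneg (by positivity)] at h
  exact (pow_left_inj₀ (norm_nonneg _) (norm_nonneg _) two_ne_zero).mp h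

theorem norm_commutator_antidiagonal_conj_diagonal (Λ z₁ z₂ : ℂ) :
    ‖(!![0, Λ; (starRingEnd ℂ) Λ, 0] : Matrix (Fin 2) (Fin 2) ℂ) * !![z₁, 0; 0, z₂]
      - !![z₁, 0; 0, z₂] * !![0, Λ; (starRingEnd ℂ) Λ, 0]‖ = ‖Λ‖ * ‖z₁ - z₂‖ := by
  rw [commutator_antidiagonal_diagonal, norm_antidiagonal_of_norm_eq, norm_mul, norm_sub_rev]
  rw [norm_mul, norm_mul, Complex.norm_conj, norm_sub_rev]

/-- Connes' spectral distance between the two pure states of `ℂ²` for the internal spectral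
triple `(ℂ², ℂ², D_I)` with `D_I = !![0, Λ; conj Λ, 0]`: the supremum of `|z₁ − z₂|` over all
pairs `(z₁, z₂)` whose commutator with `D_I` has ℓ²-operator norm at most `1` equals `1/|Λ|`,
and it is attained. -/
theorem spectral_distance_two_point (Λ : ℂ) (hΛ : Λ ≠ 0) :
    IsGreatest
      {r : ℝ | ∃ z₁ z₂ : ℂ,
        ‖((!![0, Λ; (starRingEnd ℂ) Λ, 0] : Matrix (Fin 2) (Fin 2) ℂ) * !![z₁, 0; 0, z₂]
            - !![z₁, 0; 0, z₂] * !![0, Λ; (starRingEnd ℂ) Λ, 0])‖ ≤ 1 ∧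
        r = ‖z₁ - z₂‖}
      (1 / ‖Λ‖) := by
  have hΛ_pos : 0 < ‖Λ‖ := norm_pos_iff.mpr hΛ
  simp only [norm_commutator_antidiagonal_conj_diagonal]
  constructor
  · have hdist : ‖((1 / ‖Λ‖ : ℝ) : ℂ) - 0‖ = 1 / ‖Λ‖ := by
      rw [sub_zero, Complex.norm_real, Real.norm_of_nonneg (by positivity)]
    exact ⟨_, 0, by rw [hdist, mul_one_div_cancel hΛ_pos.ne'], hdist.symm⟩
  · rintro r ⟨z₁, z₂, hle, rfl⟩
    rwa [le_div_iff₀ hΛ_pos, mul_comm]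
end

section
/- For all natural numbers m < n, the following two inequalities hold: √(2(n+1)) − √(2(m+1)) ≤ Σ_{k=m+1}^{n} 1/√(2k) ≤ √(2n) − (2m+1)/√(2(m+1)). -/
/-!
Both bounds come from the tangent-line inequality for the concave function `√`,
`√a - √b ≤ (a - b) / (2√b)`. Applied to the pairs `2k, 2k ± 2` it squeezes each term `1/√(2k)` between the
increments `√(2k+2) - √(2k)` and `√(2k) - √(2k-2)`, and the sums of these telescope. For the upper
bound the first term `k = m + 1` is kept exactly, which is where `(2m+1)/√(2(m+1))
= √(2(m+1)) - 1/√(2(m+1))` comes from.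
-/

namespace Real

theorem sqrt_sub_sqrt_le_div {a b : ℝ} (ha : 0 ≤ a) (hb : 0 < b) :
    √a - √b ≤ (a - b) / (2 * √b) := by
  have hb' : 0 < √b := sqrt_pos.mpr hb
  rw [le_div_iff₀ (by positivity)]
  nlinarith [sq_sqrt ha, sq_sqrt hb.le, sq_nonneg (√a - √b)]

theorem sqrt_two_mul_succ_sub_le {x : ℝ} (hx : 0 < x) :
    √(2 * (x + 1)) - √(2 * x) ≤ 1 / √(2 * x) := by
  have := sqrt_sub_sqrt_le_div (a := 2 * (x + 1)) (b := 2 * x) (by positivity) (by positivity)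
  convert this using 1
  field_simp
  ring

theorem one_div_sqrt_two_mul_succ_le {x : ℝ} (hx : 0 ≤ x) :
    1 / √(2 * (x + 1)) ≤ √(2 * (x + 1)) - √(2 * x) := by
  have := sqrt_sub_sqrt_le_div (a := 2 * x) (b := 2 * (x + 1)) (by positivity) (by positivity)
  rw [show (2 * x - 2 * (x + 1)) / (2 * √(2 * (x + 1))) = -(1 / √(2 * (x + 1))) by
    field_simp; ring] at this
  linarith

theorem sqrt_sub_le_sum_one_div_sqrt {m n : ℕ} (h : m ≤ n) :
    √(2 * ((n : ℝ) + 1)) - √(2 * ((m : ℝ) + 1)) ≤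
      ∑ k ∈ Finset.Icc (m + 1) n, 1 / √(2 * (k : ℝ)) := by
  induction n, h using Nat.le_induction with
  | base => simp
  | succ n hmn ih =>
    have hstep := sqrt_two_mul_succ_sub_le (x := (n : ℝ) + 1) (by positivity)
    rw [Finset.sum_Icc_succ_top (by omega)]
    push_cast
    linarith

theorem sum_one_div_sqrt_le {j n : ℕ} (h : j ≤ n) :
    ∑ k ∈ Finset.Icc j n, 1 / √(2 * (k : ℝ)) ≤
      √(2 * (n : ℝ)) - √(2 * (j : ℝ)) + 1 / √(2 * (j : ℝ)) := by
  induction n, h using Nat.le_induction with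
  | base => simp
  | succ n hjn ih =>
    have hstep := one_div_sqrt_two_mul_succ_le (x := (n : ℝ)) (by positivity)
    rw [Finset.sum_Icc_succ_top (by omega)]
    push_cast
    linarith

end Real

/-- Series/integral comparison bounds for the spectral distance between eigenstates of the
harmonic oscillator on the Moyal plane: for `m < n`,
`√(2(n+1)) − √(2(m+1)) ≤ Σ_{k=m+1}^{n} 1/√(2k) ≤ √(2n) − (2m+1)/√(2(m+1))`. -/
theorem spectral_distance_eigenstate_bounds (m n : ℕ) (h : m < n) :
    Real.sqrt (2 * ((n : ℝ) + 1)) - Real.sqrt (2 * ((m : ℝ) + 1))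
        ≤ ∑ k ∈ Finset.Icc (m + 1) n, 1 / Real.sqrt (2 * (k : ℝ)) ∧
    ∑ k ∈ Finset.Icc (m + 1) n, 1 / Real.sqrt (2 * (k : ℝ))
        ≤ Real.sqrt (2 * (n : ℝ)) - (2 * (m : ℝ) + 1) / Real.sqrt (2 * ((m : ℝ) + 1)) := by
  refine ⟨Real.sqrt_sub_le_sum_one_div_sqrt h.le, ?_⟩
  have hfirst : (2 * (m : ℝ) + 1) / √(2 * ((m : ℝ) + 1))
      = √(2 * ((m : ℝ) + 1)) - 1 / √(2 * ((m : ℝ) + 1)) := by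
    field_simp
    rw [Real.sq_sqrt (by positivity)]
    ring
  have hupper := Real.sum_one_div_sqrt_le h
  push_cast at hupper
  linarith
end

section
/- For every fixed natural number m, the ratio (Σ_{k=m+1}^{n} 1/√(2k)) / (√(2n+1) − √(2m+1)) tends to 1 as n → ∞. Equivalently, (d_n − d'_n)/d'_n → 0 where d_n := Σ_{k=m+1}^{n} 1/√(2k) and d'_n := √(2n+1) − √(2m+1). -/
/-!
Comparing each term `1/√(2k)` with the increments of `k ↦ √(2k+1)` and `k ↦ √(2k+2)` and
telescoping gives `√(2n+2) - √(2m+2) ≤ d_n ≤ √(2n+1) - √(2m+1) = d'_n`, so `d_n - d'_n` stays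
bounded by `√(2m+2) - √(2m+1)`. A bounded difference is negligible against `d'_n → ∞`, hence
`d_n ~ d'_n`, which is both claims.
-/

open Filter Finset Asymptotics

section Telescoping

variable {α : Type*} [AddCommGroup α] [PartialOrder α] [IsOrderedAddMonoid α]
  {f g : ℕ → α} {m n : ℕ}

theorem Finset.sum_Icc_succ_le_sub (hfg : ∀ k, f (k + 1) ≤ g (k + 1) - g k) (hmn : m ≤ n) :
    ∑ k ∈ Icc (m + 1) n, f k ≤ g n - g m := by
  rw [← Ico_add_one_right_eq_Icc, ← sum_Ico_add', ← sum_Ico_sub g hmn]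
  exact sum_le_sum fun k _ => hfg k

theorem Finset.sub_le_sum_Icc_succ (hgf : ∀ k, g (k + 1) - g k ≤ f (k + 1)) (hmn : m ≤ n) :
    g n - g m ≤ ∑ k ∈ Icc (m + 1) n, f k := by
  rw [← Ico_add_one_right_eq_Icc, ← sum_Ico_add', ← sum_Ico_sub g hmn]
  exact sum_le_sum fun k _ => hgf k

end Telescoping

namespace Real

theorem inv_sqrt_le_sqrt_add_one_sub_sqrt_sub_one {y : ℝ} (hy : 1 ≤ y) :
    1 / √y ≤ √(y + 1) - √(y - 1) := by
  have hu := sq_sqrt (by linarith : 0 ≤ y - 1)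
  have hv := sq_sqrt (by linarith : 0 ≤ y)
  have hw := sq_sqrt (by linarith : 0 ≤ y + 1)
  have hv0 : 0 < √y := sqrt_pos.mpr (by linarith)
  -- `√(y+1) + √(y-1) ≤ 2√y` by concavity, and `(√(y+1) - √(y-1)) (√(y+1) + √(y-1)) = 2`
  have hsum : √(y + 1) + √(y - 1) ≤ 2 * √y := by
    nlinarith [sq_nonneg (√(y + 1) - √(y - 1)), sq_nonneg (√(y + 1) + √(y - 1) - 2 * √y)]
  have hmono : √(y - 1) ≤ √(y + 1) := sqrt_le_sqrt (by linarith)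
  rw [div_le_iff₀ hv0]
  nlinarith [mul_le_mul_of_nonneg_left hsum (sub_nonneg.mpr hmono)]

theorem sqrt_add_two_sub_sqrt_le_inv_sqrt {y : ℝ} (hy : 0 < y) :
    √(y + 2) - √y ≤ 1 / √y := by
  have hv0 : 0 < √y := sqrt_pos.mpr hy
  have hv := sq_sqrt hy.le
  rw [sub_le_iff_le_add', sqrt_le_iff]
  refine ⟨by positivity, ?_⟩
  rw [add_sq, mul_assoc, mul_one_div_cancel hv0.ne', div_pow, hv]
  have : 0 ≤ 1 ^ 2 / y := by positivity
  linarith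

end Real

theorem sum_inv_sqrt_two_mul_le (m n : ℕ) (hmn : m ≤ n) :
    ∑ k ∈ Icc (m + 1) n, 1 / √(2 * (k : ℝ)) ≤ √(2 * (n : ℝ) + 1) - √(2 * (m : ℝ) + 1) := by
  refine sum_Icc_succ_le_sub (g := fun k : ℕ => √(2 * (k : ℝ) + 1)) (fun k => ?_) hmn
  have := Real.inv_sqrt_le_sqrt_add_one_sub_sqrt_sub_one (y := 2 * ((k : ℝ) + 1))
    (by linarith [(Nat.cast_nonneg k : (0 : ℝ) ≤ k)])
  push_cast
  rwa [show 2 * (k : ℝ) + 1 = 2 * (k + 1) - 1 by ring]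

theorem sqrt_sub_sqrt_le_sum_inv_sqrt_two_mul (m n : ℕ) (hmn : m ≤ n) :
    √(2 * (n : ℝ) + 2) - √(2 * (m : ℝ) + 2) ≤ ∑ k ∈ Icc (m + 1) n, 1 / √(2 * (k : ℝ)) := by
  refine sub_le_sum_Icc_succ (g := fun k : ℕ => √(2 * (k : ℝ) + 2)) (fun k => ?_) hmn
  have := Real.sqrt_add_two_sub_sqrt_le_inv_sqrt (y := 2 * ((k : ℝ) + 1)) (by positivity)
  push_cast
  rwa [show 2 * (k : ℝ) + 2 = 2 * (k + 1) by ring]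

theorem Asymptotics.isEquivalent_of_eventually_abs_sub_le {α : Type*} {l : Filter α}
    {u v : α → ℝ} {C : ℝ} (huv : ∀ᶠ x in l, |u x - v x| ≤ C) (hv : Tendsto v l atTop) :
    u ~[l] v :=
  (IsBigO.of_bound C (g := fun _ => (1 : ℝ)) (by simpa using huv)).trans_isLittleO <|
    (isLittleO_one_left_iff ℝ).mpr (tendsto_norm_atTop_atTop.comp hv)

/-- High-energy asymptotic agreement of the spectral distance
`d_n = Σ_{k=m+1}^{n} 1/√(2k)` and the modified quantum length
`d'_n = √(2n+1) − √(2m+1)` between eigenstates of the harmonic oscillator: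
the ratio `d_n/d'_n → 1`, equivalently `(d_n − d'_n)/d'_n → 0`, as `n → ∞`. -/
theorem spectral_distance_modified_length_ratio (m : ℕ) :
    Tendsto (fun n : ℕ =>
        (∑ k ∈ Finset.Icc (m + 1) n, 1 / Real.sqrt (2 * (k : ℝ)))
          / (Real.sqrt (2 * (n : ℝ) + 1) - Real.sqrt (2 * (m : ℝ) + 1)))
      atTop (nhds 1) ∧
    Tendsto (fun n : ℕ =>
        ((∑ k ∈ Finset.Icc (m + 1) n, 1 / Real.sqrt (2 * (k : ℝ)))
            - (Real.sqrt (2 * (n : ℝ) + 1) - Real.sqrt (2 * (m : ℝ) + 1)))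
          / (Real.sqrt (2 * (n : ℝ) + 1) - Real.sqrt (2 * (m : ℝ) + 1)))
      atTop (nhds 0) := by
  set d : ℕ → ℝ := fun n => ∑ k ∈ Icc (m + 1) n, 1 / √(2 * (k : ℝ))
  set d' : ℕ → ℝ := fun n => √(2 * (n : ℝ) + 1) - √(2 * (m : ℝ) + 1)
  have hd'_tendsto : Tendsto d' atTop atTop :=
    tendsto_atTop_add_const_right _ _ <| Real.tendsto_sqrt_atTop.comp <|
      tendsto_atTop_add_const_right _ _ <|
        tendsto_natCast_atTop_atTop.const_mul_atTop two_pos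
  have hbound : ∀ᶠ n in atTop, |d n - d' n| ≤ √(2 * (m : ℝ) + 2) - √(2 * (m : ℝ) + 1) := by
    filter_upwards [eventually_ge_atTop m] with n hmn
    have hupper := sum_inv_sqrt_two_mul_le m n hmn
    have hlower := sqrt_sub_sqrt_le_sum_inv_sqrt_two_mul m n hmn
    have hmono : √(2 * (n : ℝ) + 1) ≤ √(2 * (n : ℝ) + 2) := Real.sqrt_le_sqrt (by linarith)
    rw [abs_le]
    constructor <;> simp only [d, d'] <;> linarith
  have hequiv : d ~[atTop] d' :=
    isEquivalent_of_eventually_abs_sub_le hbound hd'_tendsto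
  exact ⟨(isEquivalent_iff_tendsto_one (hd'_tendsto.eventually_ne_atTop 0)).mp hequiv,
    hequiv.isLittleO.tendsto_div_nhds_zero⟩
end

section
/- Fix a natural number m, a real constant c ≥ 0 and λ > 0. Define s_n := λ·Σ_{k=m+1}^{n} 1/√(2k) and d'_n := √( λ²(√(2n+1) − √(2m+1))² + c² ). If (a_n) is any sequence of real numbers satisfying |s_n − c| ≤ a_n ≤ s_n + c for all n, then (a_n − d'_n)/d'_n → 0 as n → ∞. -/
/-!
Since `√(x + 2) - √x = 2 / (√(x + 2) + √x)`, the terms `1 / √(2k)` are squeezed between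
consecutive differences of `√(2k + 1)` and of `√(2k + 2)`, so the partial sums `s_n / λ` stay
within `√(2m + 2)` of `t_n = √(2n + 1) - √(2m + 1)`. Moreover `d'_n = √((λ t_n)² + c²)` lies
within `|c|` of `λ t_n`, and `a_n` within `c` of `s_n`. Hence `a_n - d'_n` is bounded, while
`d'_n ≥ λ t_n → ∞`.
-/

open Filter Finset

theorem Filter.Tendsto.sub_div_self_of_abs_sub_le {α : Type*} {l : Filter α} {f g : α → ℝ}
    {B : ℝ} (hg : Tendsto g l atTop) (hfg : ∀ᶠ x in l, |f x - g x| ≤ B) :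
    Tendsto (fun x => (f x - g x) / g x) l (nhds 0) := by
  refine squeeze_zero_norm' ?_ ((tendsto_const_nhds (x := B)).div_atTop hg)
  filter_upwards [hfg, hg.eventually_gt_atTop 0] with x hx hgx
  rw [norm_div, Real.norm_eq_abs, Real.norm_eq_abs, abs_of_pos hgx]
  gcongr

theorem Finset.sum_Icc_add_one_le_sub {M : Type*} [AddCommGroup M] [PartialOrder M]
    [IsOrderedAddMonoid M] {f u : ℕ → M} {m n : ℕ} (hmn : m ≤ n)
    (h : ∀ i, u (i + 1) ≤ f (i + 1) - f i) :
    ∑ k ∈ Icc (m + 1) n, u k ≤ f n - f m := by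
  rw [← Ico_add_one_right_eq_Icc, ← sum_Ico_add', ← sum_Ico_sub f hmn]
  exact sum_le_sum fun i _ => h i

theorem Finset.sub_le_sum_Icc_add_one {M : Type*} [AddCommGroup M] [PartialOrder M]
    [IsOrderedAddMonoid M] {f u : ℕ → M} {m n : ℕ} (hmn : m ≤ n)
    (h : ∀ i, f (i + 1) - f i ≤ u (i + 1)) :
    f n - f m ≤ ∑ k ∈ Icc (m + 1) n, u k := by
  rw [← Ico_add_one_right_eq_Icc, ← sum_Ico_add', ← sum_Ico_sub f hmn]
  exact sum_le_sum fun i _ => h i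

theorem Real.abs_sqrt_sq_add_sq_sub_le {x : ℝ} (hx : 0 ≤ x) (c : ℝ) :
    |√(x ^ 2 + c ^ 2) - x| ≤ |c| := by
  have hlow : x ≤ √(x ^ 2 + c ^ 2) :=
    Real.le_sqrt_of_sq_le (le_add_of_nonneg_right (sq_nonneg c))
  have hupp : √(x ^ 2 + c ^ 2) ≤ x + |c| := by
    rw [Real.sqrt_le_left (by positivity)]
    nlinarith [sq_abs c, abs_nonneg c]
  rw [abs_of_nonneg (sub_nonneg.2 hlow)]
  linarith

theorem Real.sqrt_add_two_sub_sqrt {x : ℝ} (hx : 0 ≤ x) :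
    √(x + 2) - √x = 2 / (√(x + 2) + √x) := by
  have hpos : 0 < √(x + 2) + √x := by positivity
  rw [eq_div_iff hpos.ne']
  linear_combination Real.sq_sqrt (by linarith : 0 ≤ x + 2) - Real.sq_sqrt hx

theorem Real.one_div_sqrt_add_one_le_sqrt_add_two_sub_sqrt {x : ℝ} (hx : 0 ≤ x) :
    1 / √(x + 1) ≤ √(x + 2) - √x := by
  have hconc : √(x + 2) + √x ≤ 2 * √(x + 1) := by
    have h2 := Real.sq_sqrt (by linarith : 0 ≤ x + 2)
    have h1 := Real.sq_sqrt (by linarith : 0 ≤ x + 1)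
    have h0 := Real.sq_sqrt hx
    nlinarith [sq_nonneg (√(x + 2) - √x), Real.sqrt_nonneg (x + 1),
      sq_nonneg (√(x + 2) + √x - 2 * √(x + 1))]
  rw [Real.sqrt_add_two_sub_sqrt hx, div_le_div_iff₀ (by positivity) (by positivity)]
  linarith

theorem Real.sqrt_add_two_sub_sqrt_le_one_div_sqrt {x : ℝ} (hx : 0 < x) :
    √(x + 2) - √x ≤ 1 / √x := by
  have hmono : √x ≤ √(x + 2) := Real.sqrt_le_sqrt (by linarith)
  rw [Real.sqrt_add_two_sub_sqrt hx.le, div_le_div_iff₀ (by positivity) (by positivity)]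
  linarith

theorem sum_one_div_sqrt_two_mul_le {m n : ℕ} (hmn : m ≤ n) :
    ∑ k ∈ Icc (m + 1) n, 1 / √(2 * (k : ℝ)) ≤ √(2 * (n : ℝ) + 1) - √(2 * (m : ℝ) + 1) := by
  refine sum_Icc_add_one_le_sub (f := fun i : ℕ => √(2 * (i : ℝ) + 1)) hmn fun i => ?_
  have h := Real.one_div_sqrt_add_one_le_sqrt_add_two_sub_sqrt (x := 2 * (i : ℝ) + 1)
    (by positivity)
  rwa [show 2 * (i : ℝ) + 1 + 1 = 2 * ((i + 1 : ℕ) : ℝ) by push_cast; ring,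
    show 2 * (i : ℝ) + 1 + 2 = 2 * ((i + 1 : ℕ) : ℝ) + 1 by push_cast; ring] at h

theorem sqrt_two_mul_add_two_sub_le_sum {m n : ℕ} (hmn : m ≤ n) :
    √(2 * (n : ℝ) + 2) - √(2 * (m : ℝ) + 2) ≤ ∑ k ∈ Icc (m + 1) n, 1 / √(2 * (k : ℝ)) := by
  refine sub_le_sum_Icc_add_one (f := fun i : ℕ => √(2 * (i : ℝ) + 2)) hmn fun i => ?_
  rw [show 2 * ((i + 1 : ℕ) : ℝ) = 2 * i + 2 by push_cast; ring]
  exact Real.sqrt_add_two_sub_sqrt_le_one_div_sqrt (by positivity)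

theorem abs_sum_one_div_sqrt_two_mul_sub_le {m n : ℕ} (hmn : m ≤ n) :
    |∑ k ∈ Icc (m + 1) n, 1 / √(2 * (k : ℝ)) - (√(2 * (n : ℝ) + 1) - √(2 * (m : ℝ) + 1))|
      ≤ √(2 * (m : ℝ) + 2) := by
  have hupper := sum_one_div_sqrt_two_mul_le hmn
  have hlower := sqrt_two_mul_add_two_sub_le_sum hmn
  have hmono : √(2 * (n : ℝ) + 1) ≤ √(2 * (n : ℝ) + 2) := Real.sqrt_le_sqrt (by linarith)
  rw [abs_sub_le_iff]
  constructor <;> linarith [Real.sqrt_nonneg (2 * (m : ℝ) + 1)]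

theorem abs_sub_sqrt_sq_mul_sub_sq_add_sq_le {m n : ℕ} (hmn : m ≤ n) {lam c x : ℝ}
    (hlam : 0 < lam) (hx : |x - lam * ∑ k ∈ Icc (m + 1) n, 1 / √(2 * (k : ℝ))| ≤ c) :
    |x - √(lam ^ 2 * (√(2 * (n : ℝ) + 1) - √(2 * (m : ℝ) + 1)) ^ 2 + c ^ 2)|
      ≤ c + lam * √(2 * (m : ℝ) + 2) + |c| := by
  set S := ∑ k ∈ Icc (m + 1) n, 1 / √(2 * (k : ℝ))
  set t := √(2 * (n : ℝ) + 1) - √(2 * (m : ℝ) + 1)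
  have hSt : |S - t| ≤ √(2 * (m : ℝ) + 2) := abs_sum_one_div_sqrt_two_mul_sub_le hmn
  have hDt : |√(lam ^ 2 * t ^ 2 + c ^ 2) - lam * t| ≤ |c| := by
    rw [← mul_pow]
    refine Real.abs_sqrt_sq_add_sq_sub_le (mul_nonneg hlam.le ?_) c
    exact sub_nonneg.2 (Real.sqrt_le_sqrt (by gcongr))
  calc |x - √(lam ^ 2 * t ^ 2 + c ^ 2)|
      = |(x - lam * S) + lam * (S - t) - (√(lam ^ 2 * t ^ 2 + c ^ 2) - lam * t)| := by
        ring_nf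
    _ ≤ |x - lam * S| + |lam * (S - t)| + |√(lam ^ 2 * t ^ 2 + c ^ 2) - lam * t| :=
        (abs_sub _ _).trans (by gcongr; exact abs_add_le _ _)
    _ = |x - lam * S| + lam * |S - t| + |√(lam ^ 2 * t ^ 2 + c ^ 2) - lam * t| := by
        rw [abs_mul, abs_of_pos hlam]
    _ ≤ c + lam * √(2 * (m : ℝ) + 2) + |c| := by gcongr

theorem spectral_distance_translated_limit_general (m : ℕ) (c : ℝ)
    (lam : ℝ) (hlam : 0 < lam) (a : ℕ → ℝ)
    (ha : ∀ n : ℕ,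
      |lam * (∑ k ∈ Finset.Icc (m + 1) n, 1 / Real.sqrt (2 * (k : ℝ))) - c| ≤ a n ∧
      a n ≤ lam * (∑ k ∈ Finset.Icc (m + 1) n, 1 / Real.sqrt (2 * (k : ℝ))) + c) :
    Tendsto (fun n : ℕ =>
        (a n - Real.sqrt (lam ^ 2
              * (Real.sqrt (2 * (n : ℝ) + 1) - Real.sqrt (2 * (m : ℝ) + 1)) ^ 2 + c ^ 2))
          / Real.sqrt (lam ^ 2
              * (Real.sqrt (2 * (n : ℝ) + 1) - Real.sqrt (2 * (m : ℝ) + 1)) ^ 2 + c ^ 2))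
      atTop (nhds 0) := by
  refine Tendsto.sub_div_self_of_abs_sub_le (B := c + lam * √(2 * (m : ℝ) + 2) + |c|) ?_
    (eventually_atTop.2 ⟨m, fun n hmn => ?_⟩)
  · have hlength : Tendsto (fun n : ℕ => lam * (√(2 * (n : ℝ) + 1) - √(2 * (m : ℝ) + 1)))
        atTop atTop := by
      refine Tendsto.const_mul_atTop hlam (tendsto_atTop_add_const_right _ _ ?_)
      exact Real.tendsto_sqrt_atTop.comp (tendsto_atTop_add_const_right _ _
        (tendsto_natCast_atTop_atTop.const_mul_atTop two_pos))
    refine tendsto_atTop_mono (fun n => ?_) (tendsto_abs_atTop_atTop.comp hlength)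
    exact Real.abs_le_sqrt (by rw [mul_pow]; exact le_add_of_nonneg_right (sq_nonneg c))
  · refine abs_sub_sqrt_sq_mul_sub_sq_add_sq_le hmn hlam (abs_sub_le_iff.2 ⟨?_, ?_⟩)
    · linarith [(ha n).2]
    · linarith [(ha n).1, le_abs_self (lam * (∑ k ∈ Icc (m + 1) n, 1 / √(2 * (k : ℝ))) - c)]

/-- High-energy identification of the spectral distance with the modified quantum length on
generalized coherent states: with `s_n = λ·Σ_{k=m+1}^{n} 1/√(2k)` and
`d'_n = √(λ²(√(2n+1) − √(2m+1))² + c²)`, any sequence `a_n` with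
`|s_n − c| ≤ a_n ≤ s_n + c` satisfies `(a_n − d'_n)/d'_n → 0`. -/
theorem spectral_distance_translated_limit (m : ℕ) (c : ℝ) (hc : 0 ≤ c)
    (lam : ℝ) (hlam : 0 < lam) (a : ℕ → ℝ)
    (ha : ∀ n : ℕ,
      |lam * (∑ k ∈ Finset.Icc (m + 1) n, 1 / Real.sqrt (2 * (k : ℝ))) - c| ≤ a n ∧
      a n ≤ lam * (∑ k ∈ Finset.Icc (m + 1) n, 1 / Real.sqrt (2 * (k : ℝ))) + c) :
    Tendsto (fun n : ℕ =>
        (a n - Real.sqrt (lam ^ 2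
              * (Real.sqrt (2 * (n : ℝ) + 1) - Real.sqrt (2 * (m : ℝ) + 1)) ^ 2 + c ^ 2))
          / Real.sqrt (lam ^ 2
              * (Real.sqrt (2 * (n : ℝ) + 1) - Real.sqrt (2 * (m : ℝ) + 1)) ^ 2 + c ^ 2))
      atTop (nhds 0) :=
  spectral_distance_translated_limit_general m c lam hlam a ha
end

section
/- Fix λ > 0, a natural number m, and a real number z with |z| ≤ 1, and set E_k := λ²(k + 1/2) for k ∈ ℕ. Then as n → ∞, the ratio 2·( E_m + E_n − √( (E_m + E_n)² − z²(E_n − E_m)² ) ) / ( √(2E_n) − √(2E_m) )² tends to 1 − √(1 − z²). -/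
/-!
Both the numerator `2(E_m + E_n − √((E_m+E_n)² − z²(E_n−E_m)²))` and the denominator
`(√(2E_n) − √(2E_m))²` are homogeneous of degree one in `(E_m, E_n)`, so the ratio only depends
on `E_m / E_n = (m + 1/2)/(n + 1/2)`, which tends to `0`. The ratio is continuous in this
variable at `0`, where it equals `2(1 − √(1 − z²)) / 2`.
-/

open Filter Topology

namespace ModifiedLength

/-- `lengthRatio z a b` is the ratio of the theorem with `E_m = a` and `E_n = b`. -/
noncomputable def lengthRatio (z a b : ℝ) : ℝ :=
  2 * (a + b - √((a + b) ^ 2 - z ^ 2 * (b - a) ^ 2)) / (√(2 * b) - √(2 * a)) ^ 2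

theorem lengthRatio_mul_mul (z : ℝ) {c : ℝ} (hc : 0 < c) (a b : ℝ) :
    lengthRatio z (c * a) (c * b) = lengthRatio z a b := by
  have hnum : c * a + c * b - √((c * a + c * b) ^ 2 - z ^ 2 * (c * b - c * a) ^ 2)
      = c * (a + b - √((a + b) ^ 2 - z ^ 2 * (b - a) ^ 2)) := by
    have hrad : (c * a + c * b) ^ 2 - z ^ 2 * (c * b - c * a) ^ 2
        = c ^ 2 * ((a + b) ^ 2 - z ^ 2 * (b - a) ^ 2) := by ring
    rw [hrad, Real.sqrt_mul (sq_nonneg c), Real.sqrt_sq hc.le]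
    ring
  have hden : (√(2 * (c * b)) - √(2 * (c * a))) ^ 2 = c * (√(2 * b) - √(2 * a)) ^ 2 := by
    have hsqrt (x : ℝ) : √(2 * (c * x)) = √c * √(2 * x) := by
      rw [← Real.sqrt_mul hc.le]
      ring_nf
    rw [hsqrt, hsqrt, ← mul_sub, mul_pow, Real.sq_sqrt hc.le]
  rw [lengthRatio, lengthRatio, hnum, hden, mul_left_comm, mul_div_mul_left _ _ hc.ne']

theorem lengthRatio_eq_div_one (z : ℝ) {b : ℝ} (hb : 0 < b) (a : ℝ) :
    lengthRatio z a b = lengthRatio z (a / b) 1 := by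
  rw [← lengthRatio_mul_mul z hb (a / b), mul_div_cancel₀ a hb.ne', mul_one]

theorem lengthRatio_zero_one (z : ℝ) : lengthRatio z 0 1 = 1 - √(1 - z ^ 2) := by
  have h2 : (√2) ^ 2 = 2 := Real.sq_sqrt zero_le_two
  simp only [lengthRatio, zero_add, sub_zero, mul_zero, mul_one, one_pow, Real.sqrt_zero, h2]
  ring

theorem continuousAt_lengthRatio_zero_one (z : ℝ) :
    ContinuousAt (fun t => lengthRatio z t 1) 0 := by
  refine ContinuousAt.div (by fun_prop) (by fun_prop) ?_
  simp

end ModifiedLength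

open ModifiedLength in
theorem modified_length_sphere_ratio_general (lam : ℝ) (hlam : 0 < lam) (m : ℕ) (z : ℝ) :
    Tendsto (fun n : ℕ =>
        2 * (lam ^ 2 * ((m : ℝ) + 1 / 2) + lam ^ 2 * ((n : ℝ) + 1 / 2)
            - Real.sqrt ((lam ^ 2 * ((m : ℝ) + 1 / 2) + lam ^ 2 * ((n : ℝ) + 1 / 2)) ^ 2
                - z ^ 2 * (lam ^ 2 * ((n : ℝ) + 1 / 2) - lam ^ 2 * ((m : ℝ) + 1 / 2)) ^ 2))
          / (Real.sqrt (2 * (lam ^ 2 * ((n : ℝ) + 1 / 2)))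
              - Real.sqrt (2 * (lam ^ 2 * ((m : ℝ) + 1 / 2)))) ^ 2)
      atTop (nhds (1 - Real.sqrt (1 - z ^ 2))) := by
  set E : ℕ → ℝ := fun k => lam ^ 2 * ((k : ℝ) + 1 / 2)
  have hE_pos (k : ℕ) : 0 < E k := by positivity
  have hE_atTop : Tendsto E atTop atTop :=
    (tendsto_atTop_add_const_right _ _ tendsto_natCast_atTop_atTop).const_mul_atTop (by positivity)
  have hquot : Tendsto (fun n => E m / E n) atTop (𝓝 0) :=
    tendsto_const_nhds.div_atTop hE_atTop
  have hlim := (continuousAt_lengthRatio_zero_one z).tendsto.comp hquot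
  rw [lengthRatio_zero_one] at hlim
  exact hlim.congr fun n => (lengthRatio_eq_div_one z (hE_pos n) (E m)).symm

/-- High-energy limit of the ratio between the squared modified quantum length
`d'_L(ω_{ψⁿ}, ω_{ψ̃ⁿ})² = 2(E_m + E_n − √((E_m+E_n)² − z²(E_n−E_m)²))` and
`d'_L(ω_m, ω_n)² = (√(2E_n) − √(2E_m))²`, with `E_k = λ²(k + 1/2)`:
it tends to `1 − √(1 − z²)`. -/
theorem modified_length_sphere_ratio (lam : ℝ) (hlam : 0 < lam) (m : ℕ) (z : ℝ)
    (hz : |z| ≤ 1) :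
    Tendsto (fun n : ℕ =>
        2 * (lam ^ 2 * ((m : ℝ) + 1 / 2) + lam ^ 2 * ((n : ℝ) + 1 / 2)
            - Real.sqrt ((lam ^ 2 * ((m : ℝ) + 1 / 2) + lam ^ 2 * ((n : ℝ) + 1 / 2)) ^ 2
                - z ^ 2 * (lam ^ 2 * ((n : ℝ) + 1 / 2) - lam ^ 2 * ((m : ℝ) + 1 / 2)) ^ 2))
          / (Real.sqrt (2 * (lam ^ 2 * ((n : ℝ) + 1 / 2)))
              - Real.sqrt (2 * (lam ^ 2 * ((m : ℝ) + 1 / 2)))) ^ 2)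
      atTop (nhds (1 - Real.sqrt (1 - z ^ 2))) :=
  modified_length_sphere_ratio_general lam hlam m z
end

section
/- Fix λ > 0, a natural number m, and a real number z with 0 < |z| ≤ 1, and set E_k := λ²(k + 1/2). Then as n → ∞, the ratio |z| · ( (λ/√2)·Σ_{k=m+1}^{n} 1/√k ) / √( 2( E_m + E_n − √( (E_m + E_n)² − z²(E_n − E_m)² ) ) ) tends to √(1 + √(1 − z²)). -/
/-!
Both the spectral distance and the modified quantum length grow like `√n`. The partial sums
of `1/√k` are squeezed between telescoping sums of `2(√(k+1) - √k)`, so the numerator is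
`|z|·(λ/√2)·2√n + O(1)`. In the denominator, `E_m + E_n` and `E_n - E_m` are both
`λ²n + O(1)`, and `a - √(a² - z²b²)` is homogeneous of degree one in `(a, b)`, so the squared
denominator is `2λ²(1 - √(1 - z²))·n + o(n)`. The ratio of the leading terms is
`|z| / √(1 - √(1 - z²))`, which equals `√(1 + √(1 - z²))` because
`z² = (1 - √(1 - z²))(1 + √(1 - z²))`.
-/

open Filter Finset Real Topology

theorem Filter.Tendsto.div_of_div_common {α G₀ : Type*} [GroupWithZero G₀] [TopologicalSpace G₀]
    [ContinuousInv₀ G₀] [ContinuousMul G₀] {l : Filter α} {u v w : α → G₀} {a b : G₀}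
    (hu : Tendsto (fun x => u x / w x) l (𝓝 a)) (hv : Tendsto (fun x => v x / w x) l (𝓝 b))
    (hw : ∀ᶠ x in l, w x ≠ 0) (hb : b ≠ 0) :
    Tendsto (fun x => u x / v x) l (𝓝 (a / b)) :=
  (hu.div hv hb).congr' <| hw.mono fun x hx => div_div_div_cancel_right₀ hx (u x) (v x)

namespace Real

lemma one_div_sqrt_add_one_le {x : ℝ} (hx : 0 ≤ x) :
    1 / √(x + 1) ≤ 2 * (√(x + 1) - √x) := by
  have hpos : 0 < √(x + 1) := sqrt_pos.2 (by linarith)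
  have hsq : √(x + 1) ^ 2 = x + 1 := sq_sqrt (by linarith)
  rw [div_le_iff₀ hpos]
  nlinarith [sq_sqrt hx, sq_nonneg (√(x + 1) - √x)]

lemma two_mul_sqrt_add_one_sub_le {x : ℝ} (hx : 0 < x) :
    2 * (√(x + 1) - √x) ≤ 1 / √x := by
  have hsq : √(x + 1) ^ 2 = x + 1 := sq_sqrt (by linarith)
  rw [le_div_iff₀ (sqrt_pos.2 hx)]
  nlinarith [sq_sqrt hx.le, sq_nonneg (√(x + 1) - √x)]

lemma sum_Icc_one_div_sqrt_le {m n : ℕ} (hmn : m ≤ n) :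
    ∑ k ∈ Icc (m + 1) n, 1 / √(k : ℝ) ≤ 2 * (√(n : ℝ) - √(m : ℝ)) := by
  let g : ℕ → ℝ := fun k => 2 * √((k : ℝ) - 1)
  calc ∑ k ∈ Icc (m + 1) n, 1 / √(k : ℝ)
      ≤ ∑ k ∈ Ico (m + 1) (n + 1), (g (k + 1) - g k) := by
        rw [← Ico_add_one_right_eq_Icc]
        refine sum_le_sum fun k hk => ?_
        have hk1 : (1 : ℝ) ≤ k := by exact_mod_cast (mem_Ico.1 hk).1.trans' (by omega)
        simpa [g, mul_sub] using one_div_sqrt_add_one_le (x := (k : ℝ) - 1) (by linarith)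
    _ = 2 * (√(n : ℝ) - √(m : ℝ)) := by
        rw [sum_Ico_sub g (by omega)]
        simp [g, mul_sub]

lemma two_mul_sqrt_sub_le_sum_Icc_one_div_sqrt {m n : ℕ} (hmn : m ≤ n) :
    2 * (√(n : ℝ) - √((m : ℝ) + 1)) ≤ ∑ k ∈ Icc (m + 1) n, 1 / √(k : ℝ) := by
  let g : ℕ → ℝ := fun k => 2 * √(k : ℝ)
  calc 2 * (√(n : ℝ) - √((m : ℝ) + 1))
      ≤ ∑ k ∈ Ico (m + 1) (n + 1), (g (k + 1) - g k) := by
        rw [sum_Ico_sub g (by omega)]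
        have : √(n : ℝ) ≤ √((n : ℝ) + 1) := sqrt_le_sqrt (by linarith)
        simp only [g, Nat.cast_add, Nat.cast_one]
        linarith
    _ ≤ ∑ k ∈ Icc (m + 1) n, 1 / √(k : ℝ) := by
        rw [← Ico_add_one_right_eq_Icc]
        refine sum_le_sum fun k hk => ?_
        have hk : (0 : ℝ) < k := by exact_mod_cast (mem_Ico.1 hk).1.trans_lt' (by omega)
        simpa [g, mul_sub] using two_mul_sqrt_add_one_sub_le hk

lemma tendsto_two_mul_sqrt_sub_div_sqrt (c : ℝ) :
    Tendsto (fun n : ℕ => 2 * (√(n : ℝ) - c) / √(n : ℝ)) atTop (𝓝 2) := by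
  have hc : Tendsto (fun n : ℕ => 2 * c / √(n : ℝ)) atTop (𝓝 0) :=
    tendsto_const_nhds.div_atTop (tendsto_sqrt_atTop.comp tendsto_natCast_atTop_atTop)
  refine (by simpa using tendsto_const_nhds.sub hc :
    Tendsto (fun n : ℕ => 2 - 2 * c / √(n : ℝ)) atTop (𝓝 2)).congr' ?_
  filter_upwards [eventually_gt_atTop 0] with n hn
  have : √(n : ℝ) ≠ 0 := (sqrt_pos.2 (by exact_mod_cast hn)).ne'
  field_simp

theorem tendsto_sum_Icc_one_div_sqrt_div_sqrt (m : ℕ) :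
    Tendsto (fun n : ℕ => (∑ k ∈ Icc (m + 1) n, 1 / √(k : ℝ)) / √(n : ℝ)) atTop (𝓝 2) := by
  refine tendsto_of_tendsto_of_tendsto_of_le_of_le'
    (tendsto_two_mul_sqrt_sub_div_sqrt √((m : ℝ) + 1))
    (tendsto_two_mul_sqrt_sub_div_sqrt √(m : ℝ)) ?_ ?_ <;>
  filter_upwards [eventually_ge_atTop m] with n hn <;>
  gcongr
  exacts [two_mul_sqrt_sub_le_sum_Icc_one_div_sqrt hn, sum_Icc_one_div_sqrt_le hn]

lemma sub_sqrt_sq_sub_mul_sq_div {w : ℝ} (hw : 0 ≤ w) (a b c : ℝ) :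
    (a - √(a ^ 2 - c * b ^ 2)) / w = a / w - √((a / w) ^ 2 - c * (b / w) ^ 2) := by
  rw [div_pow, div_pow, mul_div_assoc', div_sub_div_same, sqrt_div' _ (sq_nonneg w),
    sqrt_sq hw, sub_div]

lemma abs_eq_sqrt_one_sub_sqrt_mul_sqrt_one_add_sqrt {z : ℝ} (hz : |z| ≤ 1) :
    |z| = √(1 - √(1 - z ^ 2)) * √(1 + √(1 - z ^ 2)) := by
  have hz2 : z ^ 2 ≤ 1 := (sq_le_one_iff_abs_le_one z).2 hz
  have hs : √(1 - z ^ 2) ≤ 1 := sqrt_le_one.2 (by linarith [sq_nonneg z])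
  rw [← sqrt_mul (by linarith), ← sqrt_sq_eq_abs]
  congr 1
  ring_nf
  rw [sq_sqrt (by linarith)]
  ring

end Real

theorem Filter.Tendsto.sub_sqrt_sq_sub_mul_sq_div {ι : Type*} {l : Filter ι}
    {a b w : ι → ℝ} {α β : ℝ} (c : ℝ) (ha : Tendsto (fun x => a x / w x) l (𝓝 α))
    (hb : Tendsto (fun x => b x / w x) l (𝓝 β)) (hw : ∀ᶠ x in l, 0 ≤ w x) :
    Tendsto (fun x => (a x - √(a x ^ 2 - c * b x ^ 2)) / w x) l
      (𝓝 (α - √(α ^ 2 - c * β ^ 2))) :=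
  (ha.sub ((ha.pow 2).sub ((hb.pow 2).const_mul c)).sqrt).congr' <|
    hw.mono fun x hx => (Real.sub_sqrt_sq_sub_mul_sq_div hx (a x) (b x) c).symm

lemma tendsto_const_add_mul_div_natCast (a c : ℝ) :
    Tendsto (fun n : ℕ => (a + c * n) / n) atTop (𝓝 c) := by
  simpa using tendsto_add_mul_div_add_mul_atTop_nhds a 0 c one_ne_zero

noncomputable def oscillatorEnergy (lam : ℝ) (k : ℕ) : ℝ := lam ^ 2 * ((k : ℝ) + 1 / 2)

/-- `|z| · d_D(ω_m, ω_n)`, the spectral distance between the states of `S_{mn}` with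
`z`-components `±z`. -/
noncomputable def spectralDistance (lam z : ℝ) (m n : ℕ) : ℝ :=
  |z| * ((lam / √2) * ∑ k ∈ Icc (m + 1) n, 1 / √(k : ℝ))

/-- The modified quantum length `d'_L` between the states of `S_{mn}` with `z`-components `±z`. -/
noncomputable def modifiedQuantumLength (lam z : ℝ) (m n : ℕ) : ℝ :=
  √(2 * (oscillatorEnergy lam m + oscillatorEnergy lam n
    - √((oscillatorEnergy lam m + oscillatorEnergy lam n) ^ 2
      - z ^ 2 * (oscillatorEnergy lam n - oscillatorEnergy lam m) ^ 2)))

lemma tendsto_spectralDistance_div_sqrt (lam z : ℝ) (m : ℕ) :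
    Tendsto (fun n : ℕ => spectralDistance lam z m n / √(n : ℝ)) atTop
      (𝓝 (|z| * (lam / √2 * 2))) :=
  (((tendsto_sum_Icc_one_div_sqrt_div_sqrt m).const_mul (lam / √2)).const_mul |z|).congr
    fun n => by simp only [spectralDistance, mul_div_assoc]

lemma tendsto_modifiedQuantumLength_div_sqrt {lam : ℝ} (hlam : 0 ≤ lam) (z : ℝ) (m : ℕ) :
    Tendsto (fun n : ℕ => modifiedQuantumLength lam z m n / √(n : ℝ)) atTop
      (𝓝 (√2 * lam * √(1 - √(1 - z ^ 2)))) := by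
  have hsum : Tendsto (fun n : ℕ => (oscillatorEnergy lam m + oscillatorEnergy lam n) / n)
      atTop (𝓝 (lam ^ 2)) :=
    (tendsto_const_add_mul_div_natCast (lam ^ 2 * (m + 1)) (lam ^ 2)).congr fun n => by
      simp only [oscillatorEnergy]; ring
  have hdiff : Tendsto (fun n : ℕ => (oscillatorEnergy lam n - oscillatorEnergy lam m) / n)
      atTop (𝓝 (lam ^ 2)) :=
    (tendsto_const_add_mul_div_natCast (- lam ^ 2 * m) (lam ^ 2)).congr fun n => by
      simp only [oscillatorEnergy]; ring
  have hlim : √(2 * (lam ^ 2 - √((lam ^ 2) ^ 2 - z ^ 2 * (lam ^ 2) ^ 2)))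
      = √2 * lam * √(1 - √(1 - z ^ 2)) := by
    rw [show (lam ^ 2) ^ 2 - z ^ 2 * (lam ^ 2) ^ 2 = (lam ^ 2) ^ 2 * (1 - z ^ 2) by ring,
      sqrt_mul (sq_nonneg (lam ^ 2)), sqrt_sq (sq_nonneg lam), ← mul_one_sub, ← mul_assoc,
      sqrt_mul (by positivity : (0 : ℝ) ≤ 2 * lam ^ 2), sqrt_mul zero_le_two, sqrt_sq hlam]
  have := ((hsum.sub_sqrt_sq_sub_mul_sq_div (z ^ 2) hdiff
    (Eventually.of_forall fun n => Nat.cast_nonneg n)).const_mul 2).sqrt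
  simpa only [modifiedQuantumLength, hlim, ← mul_div_assoc, sqrt_div', Nat.cast_nonneg] using this

/-- High-energy limit of the ratio between the spectral distance
`d_D(ω_{ψⁿ}, ω_{ψ̃ⁿ}) = |z|·(λ/√2)·Σ_{k=m+1}^{n} 1/√k` and the modified quantum length
`d'_L(ω_{ψⁿ}, ω_{ψ̃ⁿ}) = √(2(E_m + E_n − √((E_m+E_n)² − z²(E_n−E_m)²)))`,
with `E_k = λ²(k + 1/2)`: it tends to `√(1 + √(1 − z²))`. -/
theorem spectral_distance_sphere_ratio (lam : ℝ) (hlam : 0 < lam) (m : ℕ) (z : ℝ)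
    (hz0 : 0 < |z|) (hz1 : |z| ≤ 1) :
    Tendsto (fun n : ℕ =>
        |z| * ((lam / Real.sqrt 2) * ∑ k ∈ Finset.Icc (m + 1) n, 1 / Real.sqrt (k : ℝ))
          / Real.sqrt (2 * (lam ^ 2 * ((m : ℝ) + 1 / 2) + lam ^ 2 * ((n : ℝ) + 1 / 2)
              - Real.sqrt ((lam ^ 2 * ((m : ℝ) + 1 / 2) + lam ^ 2 * ((n : ℝ) + 1 / 2)) ^ 2
                  - z ^ 2 * (lam ^ 2 * ((n : ℝ) + 1 / 2)
                      - lam ^ 2 * ((m : ℝ) + 1 / 2)) ^ 2))))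
      atTop (nhds (Real.sqrt (1 + Real.sqrt (1 - z ^ 2)))) := by
  change Tendsto (fun n => spectralDistance lam z m n / modifiedQuantumLength lam z m n) _ _
  have hs : 0 < √(1 - √(1 - z ^ 2)) := by
    have : 0 < z ^ 2 := by rw [← sq_abs]; positivity
    exact sqrt_pos.2 (sub_pos.2 ((sqrt_lt' one_pos).2 (by linarith)))
  have hsqrtn : ∀ᶠ n : ℕ in atTop, √(n : ℝ) ≠ 0 :=
    eventually_gt_atTop 0 |>.mono fun n hn => (sqrt_pos.2 (by exact_mod_cast hn)).ne'
  convert (tendsto_spectralDistance_div_sqrt lam z m).div_of_div_common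
    (tendsto_modifiedQuantumLength_div_sqrt hlam.le z m) hsqrtn (by positivity) using 2
  have : √2 ≠ 0 := by positivity
  rw [abs_eq_sqrt_one_sub_sqrt_mul_sqrt_one_add_sqrt hz1]
  field_simp
  rw [sq_sqrt zero_le_two]
end

section
/- A function α : ℕ × ℕ → ℂ satisfies the recurrence √(i+1)·α(i+1, j) = √(j+1)·α(i, j+1) for all i, j ∈ ℕ if and only if there exists a function c : ℕ → ℂ such that α(i, j) = c(i+j) / √(i!·j!) for all i, j ∈ ℕ. -/
/-!
Since `√((i+1)! j!) = √(i+1) √(i! j!)`, multiplying the recurrence by `√(i! j!)` turns it into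
`β(i+1, j) = β(i, j+1)` for `β(i, j) = √(i! j!) α(i, j)`, which says exactly that `β` is constant
on the antidiagonals `i + j = n`.
-/

open Nat

theorem forall_succ_fst_eq_succ_snd_iff {M : Type*} (f : ℕ × ℕ → M) :
    (∀ i j, f (i + 1, j) = f (i, j + 1)) ↔ ∃ c : ℕ → M, ∀ i j, f (i, j) = c (i + j) := by
  refine ⟨fun h ↦ ⟨fun n ↦ f (0, n), fun i ↦ ?_⟩, ?_⟩
  · induction i with
    | zero => simp
    | succ i ih => intro j; rw [h, ih, Nat.add_right_comm, Nat.add_assoc]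
  · rintro ⟨c, hc⟩ i j
    rw [hc, hc, Nat.add_right_comm, Nat.add_assoc]

theorem Real.sqrt_factorial_mul_factorial_succ_left (i j : ℕ) :
    √(((i + 1)! : ℝ) * j !) = √((i : ℝ) + 1) * √((i ! : ℝ) * j !) := by
  rw [← Real.sqrt_mul (by positivity), Nat.factorial_succ]
  push_cast
  ring_nf

theorem Real.sqrt_factorial_mul_factorial_succ_right (i j : ℕ) :
    √((i ! : ℝ) * (j + 1)!) = √((j : ℝ) + 1) * √((i ! : ℝ) * j !) := by
  rw [mul_comm, Real.sqrt_factorial_mul_factorial_succ_left, mul_comm (i ! : ℝ)]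

/-- A family of coefficients `α : ℕ × ℕ → ℂ` satisfies the ground-state recurrence
`√(i+1)·α(i+1,j) = √(j+1)·α(i,j+1)` (characterizing the kernel of the universal differential
`da` of the annihilation operator) if and only if `α(i,j) = c(i+j)/√(i!·j!)` for some
`c : ℕ → ℂ`. -/
theorem ground_state_recurrence_iff (α : ℕ × ℕ → ℂ) :
    (∀ i j : ℕ, (Real.sqrt ((i : ℝ) + 1) : ℂ) * α (i + 1, j)
        = (Real.sqrt ((j : ℝ) + 1) : ℂ) * α (i, j + 1)) ↔
    ∃ c : ℕ → ℂ, ∀ i j : ℕ,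
      α (i, j) = c (i + j)
        / (Real.sqrt ((Nat.factorial i : ℝ) * (Nat.factorial j : ℝ)) : ℂ) := by
  set w : ℕ × ℕ → ℂ := fun p ↦ (√((p.1 ! : ℝ) * p.2 !) : ℂ) with hw
  have hw_ne (p : ℕ × ℕ) : w p ≠ 0 := by
    simp only [hw, ne_eq, Complex.ofReal_eq_zero]
    positivity
  have recurrence_iff (i j : ℕ) :
      (√((i : ℝ) + 1) : ℂ) * α (i + 1, j) = (√((j : ℝ) + 1) : ℂ) * α (i, j + 1) ↔
        (w * α) (i + 1, j) = (w * α) (i, j + 1) := by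
    rw [← mul_left_inj' (hw_ne (i, j))]
    simp only [Pi.mul_apply, hw, Real.sqrt_factorial_mul_factorial_succ_left,
      Real.sqrt_factorial_mul_factorial_succ_right, Complex.ofReal_mul]
    ring_nf
  simp_rw [recurrence_iff]
  rw [forall_succ_fst_eq_succ_snd_iff]
  refine exists_congr fun c ↦ forall₂_congr fun i j ↦ ?_
  rw [eq_div_iff (hw_ne (i, j)), Pi.mul_apply, mul_comm]
end

section
/- For each natural number N, define α⁽ᴺ⁾ : ℕ × ℕ → ℂ by α⁽ᴺ⁾(i, j) = 1/√(i!·j!) if i + j = N and 0 otherwise. Then each α⁽ᴺ⁾ satisfies √(i+1)·α⁽ᴺ⁾(i+1, j) = √(j+1)·α⁽ᴺ⁾(i, j+1) for all i, j, is square-summable with Σ_{i,j} |α⁽ᴺ⁾(i,j)|² = 2ᴺ/N!, and the family {α⁽ᴺ⁾ : N ∈ ℕ} is linearly independent. In particular, the space of square-summable solutions of the recurrence is infinite-dimensional. -/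
/-!
Multiplying the recurrence by `√(i! (j+1)!)` shows that `α(i, j) √(i! j!)` is constant along
each antidiagonal `i + j = N`; `α⁽ᴺ⁾` is the solution supported on the `N`-th one. Its squared
norm is `Σ_{i+j=N} 1/(i! j!) = 2ᴺ/N!` by the binomial theorem, and solutions supported on
different antidiagonals are linearly independent, so no finite set spans them.
-/

/-- The coefficient family of the `N`-th ground state of the length operator `L²`:
`α⁽ᴺ⁾(i,j) = 1/√(i!·j!)` if `i + j = N`, and `0` otherwise. -/
noncomputable def groundStateCoeff (N : ℕ) : ℕ × ℕ → ℂ := fun p =>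
  if p.1 + p.2 = N then
    ((1 / Real.sqrt ((Nat.factorial p.1 : ℝ) * (Nat.factorial p.2 : ℝ)) : ℝ) : ℂ)
  else 0

open Finset Nat

theorem sum_antidiagonal_one_div_factorial_mul {K : Type*} [Field K] [CharZero K] (N : ℕ) :
    ∑ p ∈ antidiagonal N, (1 : K) / (p.1 ! * p.2 !) = 2 ^ N / N ! := by
  have hchoose : ∀ p ∈ antidiagonal N, (1 : K) / (p.1 ! * p.2 !) = N.choose p.1 / N ! := by
    rintro ⟨i, j⟩ h
    rw [HasAntidiagonal.mem_antidiagonal] at h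
    subst h
    have hfact : ((i + j) ! : K) ≠ 0 := by exact_mod_cast (i + j).factorial_ne_zero
    rw [Nat.cast_add_choose, div_div, div_mul_cancel_right₀ hfact, one_div]
  rw [sum_congr rfl hchoose, ← sum_div, ← Nat.cast_sum,
    Nat.sum_antidiagonal_eq_sum_range_succ_mk, Nat.sum_range_choose, Nat.cast_pow, Nat.cast_two]

theorem sqrt_succ_mul_one_div_sqrt_factorial_succ_mul (i j : ℕ) :
    √((i : ℝ) + 1) * (1 / √(((i + 1) ! : ℝ) * j !)) = 1 / √((i ! : ℝ) * j !) := by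
  rw [Nat.factorial_succ, Nat.cast_mul, Nat.cast_succ, mul_assoc, Real.sqrt_mul (by positivity)]
  field_simp

theorem groundStateCoeff_swap (N : ℕ) (p : ℕ × ℕ) :
    groundStateCoeff N p.swap = groundStateCoeff N p := by
  simp only [groundStateCoeff, Prod.fst_swap, Prod.snd_swap, add_comm p.2, mul_comm (p.2 ! : ℝ)]

theorem sqrt_succ_mul_groundStateCoeff_succ (N i j : ℕ) :
    (√((i : ℝ) + 1) : ℂ) * groundStateCoeff N (i + 1, j)
      = if i + j + 1 = N then ((1 / √((i ! : ℝ) * j !) : ℝ) : ℂ) else 0 := by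
  simp only [groundStateCoeff, add_right_comm i 1 j]
  split_ifs
  · rw [← Complex.ofReal_mul, sqrt_succ_mul_one_div_sqrt_factorial_succ_mul]
  · rw [mul_zero]

theorem groundStateCoeff_recurrence (N i j : ℕ) :
    (√((i : ℝ) + 1) : ℂ) * groundStateCoeff N (i + 1, j)
      = (√((j : ℝ) + 1) : ℂ) * groundStateCoeff N (i, j + 1) := by
  rw [← groundStateCoeff_swap N (i, j + 1), Prod.swap_prod_mk,
    sqrt_succ_mul_groundStateCoeff_succ, sqrt_succ_mul_groundStateCoeff_succ,
    add_comm j i, mul_comm (j ! : ℝ)]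

theorem norm_groundStateCoeff_sq (N : ℕ) (p : ℕ × ℕ) :
    ‖groundStateCoeff N p‖ ^ 2 = if p ∈ antidiagonal N then 1 / ((p.1 ! : ℝ) * p.2 !) else 0 := by
  simp only [HasAntidiagonal.mem_antidiagonal, groundStateCoeff]
  split_ifs
  · rw [Complex.norm_real, Real.norm_eq_abs, sq_abs, div_pow, one_pow,
      Real.sq_sqrt (by positivity)]
  · rw [norm_zero, sq, mul_zero]

theorem hasSum_norm_groundStateCoeff_sq (N : ℕ) :
    HasSum (fun p : ℕ × ℕ => ‖groundStateCoeff N p‖ ^ 2) ((2 : ℝ) ^ N / N !) := by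
  have hsum := hasSum_sum_of_ne_finset_zero (L := SummationFilter.unconditional _)
    fun p (hp : p ∉ antidiagonal N) => (norm_groundStateCoeff_sq N p).trans (if_neg hp)
  rwa [sum_congr rfl fun p hp => (norm_groundStateCoeff_sq N p).trans (if_pos hp),
    sum_antidiagonal_one_div_factorial_mul] at hsum

theorem groundStateCoeff_linearIndependent : LinearIndependent ℂ groundStateCoeff := by
  have heval : LinearMap.funLeft ℂ ℂ (fun n : ℕ => (n, 0)) ∘ groundStateCoeff
      = fun N => Pi.single N (groundStateCoeff N (N, 0)) := by
    ext N n
    simp only [Function.comp_apply, LinearMap.funLeft_apply, groundStateCoeff, add_zero,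
      Pi.single_apply]
    split_ifs with h
    · rw [h]
    · rfl
  refine LinearIndependent.of_comp (LinearMap.funLeft ℂ ℂ (fun n : ℕ => (n, 0))) ?_
  rw [heval]
  refine Pi.linearIndependent_single_of_ne_zero fun N => ?_
  simp [groundStateCoeff, Nat.factorial_ne_zero]

/-- Each `α⁽ᴺ⁾ = groundStateCoeff N` satisfies the ground-state recurrence
`√(i+1)·α⁽ᴺ⁾(i+1,j) = √(j+1)·α⁽ᴺ⁾(i,j+1)`, is square-summable with
`Σ |α⁽ᴺ⁾(i,j)|² = 2ᴺ/N!`, the family `{α⁽ᴺ⁾}` is linearly independent, and no finite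
family spans all square-summable solutions of the recurrence: the ground state of `L²`
is infinitely degenerate. -/
theorem ground_state_infinitely_degenerate :
    (∀ N i j : ℕ, (Real.sqrt ((i : ℝ) + 1) : ℂ) * groundStateCoeff N (i + 1, j)
        = (Real.sqrt ((j : ℝ) + 1) : ℂ) * groundStateCoeff N (i, j + 1)) ∧
    (∀ N : ℕ, HasSum (fun p : ℕ × ℕ => ‖groundStateCoeff N p‖ ^ 2)
        ((2 : ℝ) ^ N / (Nat.factorial N : ℝ))) ∧
    LinearIndependent ℂ groundStateCoeff ∧
    ¬ ∃ s : Finset ((ℕ × ℕ) → ℂ), ∀ α : (ℕ × ℕ) → ℂ,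
        ((∀ i j : ℕ, (Real.sqrt ((i : ℝ) + 1) : ℂ) * α (i + 1, j)
            = (Real.sqrt ((j : ℝ) + 1) : ℂ) * α (i, j + 1)) ∧
          Summable (fun p : ℕ × ℕ => ‖α p‖ ^ 2)) →
        α ∈ Submodule.span ℂ (s : Set ((ℕ × ℕ) → ℂ)) := by
  refine ⟨groundStateCoeff_recurrence, hasSum_norm_groundStateCoeff_sq,
    groundStateCoeff_linearIndependent, ?_⟩
  rintro ⟨s, hs⟩
  have hspan : Set.range groundStateCoeff ≤ Submodule.span ℂ (s : Set ((ℕ × ℕ) → ℂ)) := by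
    rintro _ ⟨N, rfl⟩
    exact hs _ ⟨groundStateCoeff_recurrence N, (hasSum_norm_groundStateCoeff_sq N).summable⟩
  exact Finite.false (groundStateCoeff_linearIndependent.finite_of_le_span_finite _ _ hspan)
end
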